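/- arXiv:2307.15955 — 2 statements merged into one kernel-verified Lean document; each statement's English description precedes it below -/
import Mathlib

section
/- Let F be a real normed vector space and f : F → F a continuous map that is twice continuously differentiable and homogeneous of degree 2, i.e. f(s•v) = s^2 • f(v) for all s ∈ ℝ and v ∈ F. Then f is a quadratic map given by its second derivative at 0: f(v) = (1/2) • (D²f(0))(v, v) for all v ∈ F. -/
/-- A twice continuously differentiable map `f : F → F` that is homogeneous of degree 2
is the quadratic map given by half its second derivative at `0`. -/
theorem spray_quadratic_from_homogeneous
    {F : Type*} [NormedAddCommGroup F] [NormedSpace ℝ F]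
    (f : F → F) (hf : ContDiff ℝ 2 f)
    (hhom : ∀ (s : ℝ) (v : F), f (s • v) = s ^ 2 • f v) :
    ∀ v : F, f v = (1 / 2 : ℝ) • (iteratedFDeriv ℝ 2 f 0 ![v, v]) := by
  intro v
  have hdf : Differentiable ℝ f := hf.differentiable (by norm_num)
  have hf' : ContDiff ℝ 1 (fderiv ℝ f) := hf.fderiv_right (le_refl _)
  -- step 1 : for all s, fderiv f (s•v) v = (2*s) • f v
  have key : ∀ s : ℝ, fderiv ℝ f (s • v) v = (2 * s) • f v := by
    intro s
    have hline : HasDerivAt (fun t : ℝ => t • v) v s := by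
      simpa using (hasDerivAt_id s).smul_const v
    have h1 : HasDerivAt (fun t : ℝ => f (t • v)) (fderiv ℝ f (s • v) v) s :=
      (hdf (s • v)).hasFDerivAt.comp_hasDerivAt s hline
    have h2 : HasDerivAt (fun t : ℝ => t ^ 2 • f v) ((2 * s) • f v) s := by
      simpa using (hasDerivAt_pow 2 s).smul_const (f v)
    have h1' : HasDerivAt (fun t : ℝ => t ^ 2 • f v) (fderiv ℝ f (s • v) v) s := by
      convert h1 using 2 with t
      exact (hhom t v).symm
    exact h1'.unique h2
  -- step 2 : differentiate both sides at s = 0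
  have hline0 : HasDerivAt (fun t : ℝ => t • v) v 0 := by
    simpa using (hasDerivAt_id (0 : ℝ)).smul_const v
  have hdd : HasFDerivAt (fderiv ℝ f) (fderiv ℝ (fderiv ℝ f) 0) 0 :=
    (hf'.differentiable (by norm_num) 0).hasFDerivAt
  have hA : HasFDerivAt (fun x : F => fderiv ℝ f x v)
      ((ContinuousLinearMap.apply ℝ F v).comp (fderiv ℝ (fderiv ℝ f) 0)) ((0:ℝ) • v) := by
    rw [zero_smul]
    exact (ContinuousLinearMap.apply ℝ F v).hasFDerivAt.comp 0 hdd
  have hL : HasDerivAt (fun s : ℝ => fderiv ℝ f (s • v) v)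
      ((fderiv ℝ (fderiv ℝ f) 0 v) v) 0 := by
    exact hA.comp_hasDerivAt 0 hline0
  have hR : HasDerivAt (fun s : ℝ => (2 * s) • f v) ((2 : ℝ) • f v) 0 := by
    simpa using ((hasDerivAt_id (0 : ℝ)).const_mul 2).smul_const (f v)
  have hL' : HasDerivAt (fun s : ℝ => (2 * s) • f v)
      ((fderiv ℝ (fderiv ℝ f) 0 v) v) 0 := by
    convert hL using 2 with s
    exact (key s).symm
  have heq : (fderiv ℝ (fderiv ℝ f) 0 v) v = (2 : ℝ) • f v := hL'.unique hR
  rw [iteratedFDeriv_two_apply]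
  simp only [Matrix.cons_val_zero, Matrix.cons_val_one, Matrix.head_cons]
  rw [heq, smul_smul]
  norm_num
end

section
/- Conversely, let E, W be real vector spaces, J : E → E linear with J² = 0 and ker J = range J, p : E → W a surjective linear map with ker p = ker J, and K : E → W a surjective linear map satisfying K ∘ J = p. Set H := ker K and V := ker J. Then H ∩ V = {0} and H + V = E, i.e. E = H ⊕ V; hence K determines a splitting (a connection) of E into horizontal and vertical subspaces. -/
namespace LinearMap

variable {R M N P : Type*} [Semiring R] [AddCommMonoid M] [Module R M]

theorem ker_inf_range_eq_bot_of_ker_comp_le [AddCommMonoid N] [Module R N]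
    [AddCommMonoid P] [Module R P]
    {f : M →ₗ[R] N} {g : N →ₗ[R] P} (h : ker (g ∘ₗ f) ≤ ker f) :
    ker g ⊓ range f = ⊥ := by
  rw [eq_bot_iff]
  rintro _ ⟨hgx, y, rfl⟩
  exact h (mem_ker.mpr hgx)

theorem ker_sup_range_eq_top_of_surjective_comp [AddCommGroup N] [Module R N]
    [AddCommGroup P] [Module R P]
    {f : M →ₗ[R] N} {g : N →ₗ[R] P} (h : Function.Surjective (g ∘ₗ f)) :
    ker g ⊔ range f = ⊤ := by
  rw [eq_top_iff]
  intro x _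
  obtain ⟨y, hy⟩ := h (g x)
  refine Submodule.mem_sup.mpr ⟨x - f y, ?_, f y, mem_range_self f y, sub_add_cancel x (f y)⟩
  rw [mem_ker, map_sub, ← comp_apply, hy, sub_self]

end LinearMap

theorem connection_from_connection_map_general
    {E W : Type*} [AddCommGroup E] [Module ℝ E] [AddCommGroup W] [Module ℝ W]
    (J : E →ₗ[ℝ] E)
    (hJ : LinearMap.ker J = LinearMap.range J)
    (p : E →ₗ[ℝ] W) (hp : Function.Surjective p)
    (hkerp : LinearMap.ker p = LinearMap.ker J)
    (K : E →ₗ[ℝ] W)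
    (hKJ : K ∘ₗ J = p) :
    LinearMap.ker K ⊓ LinearMap.ker J = ⊥ ∧
      LinearMap.ker K ⊔ LinearMap.ker J = ⊤ := by
  subst hKJ
  rw [hJ]
  exact ⟨LinearMap.ker_inf_range_eq_bot_of_ker_comp_le hkerp.le,
    LinearMap.ker_sup_range_eq_top_of_surjective_comp hp⟩

/-- Converse direction: a connection map `K` with `K ∘ J = p` determines a splitting
into horizontal subspace `H = ker K` and vertical subspace `V = ker J`. -/
theorem connection_from_connection_map
    {E W : Type*} [AddCommGroup E] [Module ℝ E] [AddCommGroup W] [Module ℝ W]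
    (J : E →ₗ[ℝ] E) (hJ2 : J ∘ₗ J = 0)
    (hJ : LinearMap.ker J = LinearMap.range J)
    (p : E →ₗ[ℝ] W) (hp : Function.Surjective p)
    (hkerp : LinearMap.ker p = LinearMap.ker J)
    (K : E →ₗ[ℝ] W) (hK : Function.Surjective K)
    (hKJ : K ∘ₗ J = p) :
    LinearMap.ker K ⊓ LinearMap.ker J = ⊥ ∧
      LinearMap.ker K ⊔ LinearMap.ker J = ⊤ :=
  connection_from_connection_map_general J hJ p hp hkerp K hKJ
end
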